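/- In the ring game G with n >= 3 players and set of colours C with |C| >= n, every scheduler f satisfying f(s, 1) = s_1' (the successor of s_1 in the fixed cyclic order on C) ensures self-stabilization: in every improvement path generated by f, every player is selected infinitely often and, from a certain point on, every joint strategy in it is legitimate. -/

import Mathlib

/-!
Game-theoretic formalization of Dijkstra's self-stabilization (Apt & Shoja).
Players are `Fin n`; a joint strategy is `s : Fin n → C`.
-/

/-- Payoff in the ring game `G` on the directed ring `0 → 1 → ⋯ → n-1 → 0`:
player `0` plays the anti-coordination game with respect to its predecessor
(player `n-1`, i.e. `0 - 1` in `Fin n`); every other player `i` plays the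
coordination game with respect to its predecessor `i - 1`. -/
def ringPayoff {n : ℕ} [NeZero n] {C : Type*} [DecidableEq C]
    (s : Fin n → C) (i : Fin n) : ℕ :=
  if i = 0 then (if s i = s (i - 1) then 0 else 1)
  else (if s i = s (i - 1) then 1 else 0)

/-- `s i` is a best response of player `i` to the strategies of the others in `s`. -/
def BestResponse {n : ℕ} {C : Type*}
    (p : (Fin n → C) → Fin n → ℕ) (s : Fin n → C) (i : Fin n) : Prop :=
  ∀ c : C, p (Function.update s i c) i ≤ p s i

/-- An improvement step from `s` to `s'` in which player `i` is selected:
only player `i` changes its strategy and its payoff strictly increases. -/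
def StepAt {n : ℕ} {C : Type*}
    (p : (Fin n → C) → Fin n → ℕ) (i : Fin n) (s s' : Fin n → C) : Prop :=
  (∀ j, j ≠ i → s' j = s j) ∧ p s i < p s' i

/-- A joint strategy is legitimate if exactly one player does not play a best response. -/
def Legitimate {n : ℕ} {C : Type*}
    (p : (Fin n → C) → Fin n → ℕ) (s : Fin n → C) : Prop :=
  ∃! i : Fin n, ¬ BestResponse p s i

/-!
Dijkstra's argument. Call a player privileged when its payoff is `0`, i.e. when it does not play
a best response. A move of player `i` removes its privilege and can only create one at `i + 1`,
so the number of privileged players never increases. While player `0` does not move, privileges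
only travel towards player `0`, so player `0` moves infinitely often, each time replacing its
colour `x` by `π x`.

When player `0` moves it shares its colour with player `n - 1`, so at most `n - 1 < |C|` colours
are in use and some colour `c` is held by nobody. Player `0` eventually moves while holding `c`;
until then the holders of `c` form an initial segment `0, …, k` of the ring, because the other
players only copy their predecessor. At that move player `n - 1` holds `c`, hence everybody
does and only player `0` is privileged. From then on exactly one player is privileged, and the
privilege passes from each player to its successor.
-/

open Finset

theorem Finset.sum_insert_le_add {α M : Type*} [DecidableEq α] [AddCommMonoid M] [PartialOrder M]
    [CanonicallyOrderedAdd M] (s : Finset α) (a : α) (f : α → M) :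
    ∑ x ∈ insert a s, f x ≤ f a + ∑ x ∈ s, f x := by
  by_cases h : a ∈ s
  · rw [insert_eq_of_mem h]
    exact le_add_self
  · rw [sum_insert h]

theorem Nat.exists_min_ge {p : ℕ → Prop} {t : ℕ} (h : ∃ m ≥ t, p m) :
    ∃ m ≥ t, p m ∧ ∀ r, t ≤ r → r < m → ¬ p r := by
  classical
  exact ⟨Nat.find h, (Nat.find_spec h).1, (Nat.find_spec h).2,
    fun r hr hrm hp => Nat.find_min h hrm ⟨hr, hp⟩⟩

namespace Fin

variable {n : ℕ} [NeZero n]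

theorem sub_one_ne_self (hn : 2 ≤ n) (i : Fin n) : i - 1 ≠ i := by
  rw [Ne, sub_eq_self, Fin.ext_iff, val_one', val_zero, Nat.mod_eq_of_lt hn]
  exact one_ne_zero

theorem le_zero_sub_one (hn : 2 ≤ n) (i : Fin n) : i ≤ 0 - 1 := by
  rw [zero_sub, le_def, Fin.val_neg', val_one', Nat.mod_eq_of_lt hn,
    Nat.mod_eq_of_lt (by omega)]
  omega

theorem lt_iff_le_sub_one {i j : Fin n} (hi : i ≠ 0) : j < i ↔ j ≤ i - 1 := by
  rw [lt_def, le_def, val_sub_one_of_ne_zero hi]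
  have : i.val ≠ 0 := val_ne_zero_iff.mpr hi
  omega

theorem sub_one_lt_self {i : Fin n} (hi : i ≠ 0) : i - 1 < i :=
  (lt_iff_le_sub_one hi).mpr le_rfl

theorem val_neg_add_one_lt {i : Fin n} (hi : i ≠ 0) : (-(i + 1)).val < (-i).val := by
  rw [neg_add', val_sub_one_of_ne_zero (neg_ne_zero.mpr hi)]
  have : (-i).val ≠ 0 := val_ne_zero_iff.mpr (neg_ne_zero.mpr hi)
  omega

open Fin.NatCast in
theorem exists_ge_apply_eq_of_apply_add_one {f : ℕ → Fin n} {K : ℕ}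
    (hf : ∀ m ≥ K, f (m + 1) = f m + 1) (i : Fin n) (k : ℕ) : ∃ m ≥ k, f m = i := by
  set t := max k K
  have hshift : ∀ d : ℕ, f (t + d) = f t + (d : Fin n) := by
    intro d
    induction d with
    | zero => simp
    | succ d ih => rw [← add_assoc, hf _ (by omega), ih, Nat.cast_succ, add_assoc]
  refine ⟨t + (i - f t).val, by omega, ?_⟩
  rw [hshift, cast_val_eq_self, add_sub_cancel]

end Fin

theorem stepAt_update_of_lt {n : ℕ} {C : Type*} [DecidableEq C]
    {p : (Fin n → C) → Fin n → ℕ} {s : Fin n → C} {i : Fin n} {c : C}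
    (h : p s i < p (Function.update s i c) i) : StepAt p i s (Function.update s i c) :=
  ⟨fun _ hj => Function.update_of_ne hj _ _, h⟩

def IsImprovementPath {n : ℕ} {C : Type*} (p : (Fin n → C) → Fin n → ℕ)
    (σ : ℕ → Fin n → C) (sel : ℕ → Fin n) : Prop :=
  ∀ k, StepAt p (sel k) (σ k) (σ (k + 1))

theorem IsImprovementPath.apply_eq_of_forall_sel_ne {n : ℕ} {C : Type*}
    {p : (Fin n → C) → Fin n → ℕ} {σ : ℕ → Fin n → C} {sel : ℕ → Fin n}
    (hpath : IsImprovementPath p σ sel) {j : Fin n} {t m : ℕ} (htm : t ≤ m)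
    (hj : ∀ r, t ≤ r → r < m → sel r ≠ j) : σ m j = σ t j := by
  induction m, htm using Nat.le_induction with
  | base => rfl
  | succ m htm ih =>
    rw [(hpath m).1 j (hj m htm (by omega)).symm, ih fun r hr hrm => hj r hr (by omega)]

section RingGame

variable {n : ℕ} [NeZero n] {C : Type*} [DecidableEq C] {s s' : Fin n → C} {i : Fin n}

theorem ringPayoff_le_one (s : Fin n → C) (i : Fin n) : ringPayoff s i ≤ 1 := by
  unfold ringPayoff
  split_ifs <;> simp

theorem ringPayoff_zero_eq_zero_iff : ringPayoff s 0 = 0 ↔ s 0 = s (0 - 1) := by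
  simp [ringPayoff]

theorem ringPayoff_eq_zero_iff_of_ne_zero (hi : i ≠ 0) :
    ringPayoff s i = 0 ↔ s i ≠ s (i - 1) := by
  simp [ringPayoff, hi]

theorem exists_ringPayoff_update_eq_one (hn : 2 ≤ n) [Nontrivial C] (s : Fin n → C)
    (i : Fin n) : ∃ c, ringPayoff (Function.update s i c) i = 1 := by
  have hpred := Fin.sub_one_ne_self hn i
  by_cases hi : i = 0
  · subst hi
    obtain ⟨c, hc⟩ := exists_ne (s (0 - 1))
    refine ⟨c, ?_⟩
    simp only [ringPayoff, Function.update_self, Function.update_of_ne hpred, if_neg hc,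
      ↓reduceIte]
  · exact ⟨s (i - 1), by simp [ringPayoff, hi, Function.update_of_ne hpred]⟩

theorem not_bestResponse_ringPayoff_iff (hn : 2 ≤ n) [Nontrivial C] :
    ¬ BestResponse ringPayoff s i ↔ ringPayoff s i = 0 := by
  constructor
  · intro hbr
    by_contra hpos
    exact hbr fun c => (ringPayoff_le_one _ i).trans (by omega)
  · intro hzero hbr
    obtain ⟨c, hc⟩ := exists_ringPayoff_update_eq_one hn s i
    have := hbr c
    omega

def privileged (s : Fin n → C) : Finset (Fin n) := {i | ringPayoff s i = 0}

theorem mem_privileged : i ∈ privileged s ↔ ringPayoff s i = 0 := by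
  simp [privileged]

/-- `(-j).val` is the distance from `j` forward to player `0`. -/
def tokenWeight (s : Fin n → C) : ℕ := ∑ j ∈ privileged s, (-j).val

theorem privileged_const (c : C) : privileged (Function.const (Fin n) c) = {0} := by
  ext j
  by_cases hj : j = 0
  · simp [hj, mem_privileged, ringPayoff_zero_eq_zero_iff]
  · simp [hj, mem_privileged, ringPayoff_eq_zero_iff_of_ne_zero hj]

theorem legitimate_of_privileged_eq_singleton (hn : 2 ≤ n) [Nontrivial C]
    (h : privileged s = {i}) : Legitimate ringPayoff s := by
  refine ⟨i, ?_, fun j (hj : ¬ BestResponse ringPayoff s j) => ?_⟩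
  · show ¬ BestResponse ringPayoff s i
    rw [not_bestResponse_ringPayoff_iff hn, ← mem_privileged, h]
    exact mem_singleton_self i
  · rwa [not_bestResponse_ringPayoff_iff hn, ← mem_privileged, h, mem_singleton] at hj

theorem exists_forall_apply_ne_of_ringPayoff_zero_eq_zero [Fintype C] (hn : 2 ≤ n)
    (hC : n ≤ Fintype.card C) (h0 : ringPayoff s 0 = 0) : ∃ c, ∀ j, s j ≠ c := by
  have hmem : ∀ j, s j ∈ (univ.erase 0).image s := by
    intro j
    by_cases hj : j = 0
    · rw [hj, ringPayoff_zero_eq_zero_iff.mp h0]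
      exact mem_image_of_mem s (by simpa using Fin.sub_one_ne_self hn 0)
    · exact mem_image_of_mem s (by simpa using hj)
  have hcard : #((univ.erase 0).image s) < #(univ : Finset C) := by
    calc #((univ.erase 0).image s) ≤ #(univ.erase (0 : Fin n)) := card_image_le
      _ < #(univ : Finset C) := by simp; omega
  obtain ⟨c, -, hc⟩ := exists_mem_notMem_of_card_lt_card hcard
  exact ⟨c, fun j hj => hc (hj ▸ hmem j)⟩

namespace StepAt

theorem ringPayoff_eq_zero (h : StepAt ringPayoff i s s') : ringPayoff s i = 0 := by
  have := ringPayoff_le_one s' i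
  have := h.2
  omega

theorem mem_privileged (h : StepAt ringPayoff i s s') : i ∈ privileged s :=
  _root_.mem_privileged.mpr h.ringPayoff_eq_zero

theorem apply_eq_sub_one (h : StepAt ringPayoff i s s') (hn : 2 ≤ n) (hi : i ≠ 0) :
    s' i = s (i - 1) := by
  have hcopy : s' i = s' (i - 1) := by
    by_contra hne
    have := (ringPayoff_eq_zero_iff_of_ne_zero hi).mpr hne
    have := h.2
    omega
  rw [hcopy, h.1 _ (Fin.sub_one_ne_self hn i)]

theorem ringPayoff_eq_of_ne (h : StepAt ringPayoff i s s') {j : Fin n} (hj : j ≠ i)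
    (hj' : j ≠ i + 1) : ringPayoff s' j = ringPayoff s j := by
  have hpred : j - 1 ≠ i := fun hji => hj' (sub_eq_iff_eq_add.mp hji)
  simp only [ringPayoff, h.1 j hj, h.1 _ hpred]

theorem privileged_subset (h : StepAt ringPayoff i s s') :
    privileged s' ⊆ insert (i + 1) ((privileged s).erase i) := by
  intro j hj
  by_cases hj' : j = i + 1
  · exact hj' ▸ mem_insert_self _ _
  · have hji : j ≠ i := by
      rintro rfl
      have := _root_.mem_privileged.mp hj
      have := h.2
      omega
    rw [_root_.mem_privileged, h.ringPayoff_eq_of_ne hji hj', ← _root_.mem_privileged] at hj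
    exact mem_insert_of_mem (mem_erase.mpr ⟨hji, hj⟩)

theorem card_privileged_le (h : StepAt ringPayoff i s s') :
    #(privileged s') ≤ #(privileged s) :=
  calc #(privileged s') ≤ #(insert (i + 1) ((privileged s).erase i)) :=
        card_le_card h.privileged_subset
    _ ≤ #((privileged s).erase i) + 1 := card_insert_le _ _
    _ = #(privileged s) := card_erase_add_one h.mem_privileged

theorem tokenWeight_lt (h : StepAt ringPayoff i s s') (hi : i ≠ 0) :
    tokenWeight s' < tokenWeight s :=
  calc tokenWeight s' ≤ ∑ j ∈ insert (i + 1) ((privileged s).erase i), (-j).val :=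
        sum_le_sum_of_subset h.privileged_subset
    _ ≤ (-(i + 1)).val + ∑ j ∈ (privileged s).erase i, (-j).val := sum_insert_le_add _ _ _
    _ < (-i).val + ∑ j ∈ (privileged s).erase i, (-j).val :=
        Nat.add_lt_add_right (Fin.val_neg_add_one_lt hi) _
    _ = tokenWeight s := add_sum_erase _ (fun j => (-j).val) h.mem_privileged

theorem isLowerSet_setOf_apply_eq (h : StepAt ringPayoff i s s') (hn : 2 ≤ n) (hi : i ≠ 0)
    {c : C} (hs : IsLowerSet {j | s j = c}) : IsLowerSet {j | s' j = c} := by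
  intro a b hba ha
  simp only [Set.mem_ofPred_eq] at ha ⊢
  have hcopy := h.apply_eq_sub_one hn hi
  by_cases hb : b = i
  · subst hb
    rw [hcopy]
    by_cases ha' : a = b
    · subst ha'
      rwa [hcopy] at ha
    · rw [h.1 a ha'] at ha
      exact hs ((Fin.sub_one_lt_self hi).le.trans hba) ha
  · rw [h.1 b hb]
    by_cases ha' : a = i
    · subst ha'
      rw [hcopy] at ha
      exact hs ((Fin.lt_iff_le_sub_one hi).mp (lt_of_le_of_ne hba hb)) ha
    · rw [h.1 a ha'] at ha
      exact hs hba ha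

theorem isLowerSet_setOf_apply_eq_of_forall_ne (h : StepAt ringPayoff 0 s s') {c : C}
    (hc : ∀ j, s j ≠ c) : IsLowerSet {j | s' j = c} := by
  intro a b hba ha
  have ha0 : a = 0 := by
    by_contra ha0
    exact hc a (h.1 a ha0 ▸ ha)
  subst ha0
  rwa [nonpos_iff_eq_zero.mp hba]

end StepAt

namespace IsImprovementPath

variable {σ : ℕ → Fin n → C} {sel : ℕ → Fin n}

theorem exists_ge_sel_eq_zero (hpath : IsImprovementPath ringPayoff σ sel) (k : ℕ) :
    ∃ m ≥ k, sel m = 0 := by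
  by_contra! hne
  obtain ⟨d, hd⟩ :=
    WellFounded.not_rel_apply_succ (r := (· < ·)) fun d => tokenWeight (σ (k + d))
  exact hd ((hpath (k + d)).tokenWeight_lt (hne _ (by omega)))

theorem exists_ge_sel_eq_zero_apply_eq (hpath : IsImprovementPath ringPayoff σ sel)
    {π : Equiv.Perm C} (h0 : ∀ k, sel k = 0 → σ (k + 1) 0 = π (σ k 0))
    (hπ : ∀ x y : C, ∃ k : ℕ, (π ^ k) x = y) (t : ℕ) (c : C) :
    ∃ m ≥ t, sel m = 0 ∧ σ m 0 = c := by
  have hnext : ∀ m, sel m = 0 → ∃ m' ≥ m + 1, sel m' = 0 ∧ σ m' 0 = π (σ m 0) := by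
    intro m hm
    obtain ⟨m', hm', hsel, hmin⟩ := Nat.exists_min_ge (hpath.exists_ge_sel_eq_zero (m + 1))
    exact ⟨m', hm', hsel, by rw [hpath.apply_eq_of_forall_sel_ne hm' hmin, h0 m hm]⟩
  obtain ⟨m₀, hm₀, hsel₀⟩ := hpath.exists_ge_sel_eq_zero t
  have hreach : ∀ k : ℕ, ∃ m ≥ t, sel m = 0 ∧ σ m 0 = (π ^ k) (σ m₀ 0) := by
    intro k
    induction k with
    | zero => exact ⟨m₀, hm₀, hsel₀, rfl⟩
    | succ k ih =>
      obtain ⟨m, hm, hsel, hσ⟩ := ih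
      obtain ⟨m', hm', hsel', hσ'⟩ := hnext m hsel
      exact ⟨m', by omega, hsel', by rw [hσ', hσ, pow_succ', Equiv.Perm.mul_apply]⟩
  obtain ⟨k, rfl⟩ := hπ (σ m₀ 0) c
  exact hreach k

theorem isLowerSet_setOf_apply_eq_of_le (hpath : IsImprovementPath ringPayoff σ sel)
    (hn : 2 ≤ n) {c : C} {t m : ℕ} (htm : t ≤ m) (ht : IsLowerSet {j | σ t j = c})
    (havoid : ∀ r, t ≤ r → r < m → sel r = 0 → σ r 0 ≠ c) :
    IsLowerSet {j | σ m j = c} := by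
  induction m, htm using Nat.le_induction with
  | base => exact ht
  | succ m htm ih =>
    have hlow := ih fun r hr hrm => havoid r hr (by omega)
    by_cases hsel : sel m = 0
    · have hstep := hpath m
      rw [hsel] at hstep
      exact hstep.isLowerSet_setOf_apply_eq_of_forall_ne fun j hj =>
        havoid m htm (by omega) hsel (hlow (Fin.zero_le j) hj)
    · exact (hpath m).isLowerSet_setOf_apply_eq hn hsel hlow

theorem exists_eq_const [Fintype C] (hpath : IsImprovementPath ringPayoff σ sel) (hn : 2 ≤ n)
    (hC : n ≤ Fintype.card C) {π : Equiv.Perm C}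
    (h0 : ∀ k, sel k = 0 → σ (k + 1) 0 = π (σ k 0)) (hπ : ∀ x y : C, ∃ k : ℕ, (π ^ k) x = y) :
    ∃ m c, σ m = Function.const (Fin n) c := by
  obtain ⟨t, -, hsel⟩ := hpath.exists_ge_sel_eq_zero 0
  obtain ⟨c, hc⟩ := exists_forall_apply_ne_of_ringPayoff_zero_eq_zero hn hC
    (hsel ▸ (hpath t).ringPayoff_eq_zero)
  obtain ⟨m, hm, ⟨hsel_m, hσm⟩, hmin⟩ :=
    Nat.exists_min_ge (hpath.exists_ge_sel_eq_zero_apply_eq h0 hπ t c)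
  have hlow : IsLowerSet {j | σ m j = c} :=
    hpath.isLowerSet_setOf_apply_eq_of_le hn hm (fun a _ _ ha => (hc a ha).elim)
      fun r hr hrm hr0 hrc => hmin r hr hrm ⟨hr0, hrc⟩
  have hloop : σ m 0 = σ m (0 - 1) :=
    ringPayoff_zero_eq_zero_iff.mp (hsel_m ▸ (hpath m).ringPayoff_eq_zero)
  exact ⟨m, c, funext fun j => hlow (Fin.le_zero_sub_one hn j) (hloop.symm.trans hσm)⟩

theorem privileged_eq_singleton_of_le (hpath : IsImprovementPath ringPayoff σ sel) {m k : ℕ}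
    (hm : #(privileged (σ m)) ≤ 1) (hk : m ≤ k) : privileged (σ k) = {sel k} := by
  have hle : #(privileged (σ k)) ≤ 1 :=
    (antitone_nat_of_succ_le (f := fun k => #(privileged (σ k)))
      (fun k => (hpath k).card_privileged_le) hk).trans hm
  exact eq_singleton_iff_unique_mem.mpr ⟨(hpath k).mem_privileged,
    fun j hj => card_le_one.mp hle j hj _ (hpath k).mem_privileged⟩

theorem sel_add_one_eq (hpath : IsImprovementPath ringPayoff σ sel) {m : ℕ}
    (h : privileged (σ m) = {sel m}) : sel (m + 1) = sel m + 1 := by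
  have := (hpath m).privileged_subset (hpath (m + 1)).mem_privileged
  rwa [h, erase_singleton, insert_empty, mem_singleton] at this

end IsImprovementPath

end RingGame

/-- Consider the ring game `G` with `n ≥ 3` players and a set of
colours `C` with `|C| ≥ n`, together with a fixed cyclic order on `C` (a
permutation `π` of `C` consisting of a single cycle through all elements of `C`).
Every scheduler `f` satisfying `f s 0 = π (s 0)` ensures self-stabilization:
in every improvement path generated by `f`, every player is selected infinitely
often and, from a certain point on, every joint strategy in it is legitimate. -/
theorem ring_game_scheduler_self_stabilization
    (n : ℕ) [NeZero n] (hn : 3 ≤ n)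
    (C : Type*) [Fintype C] [DecidableEq C] (hC : n ≤ Fintype.card C)
    (π : Equiv.Perm C) (hπ : ∀ x y : C, ∃ k : ℕ, (π ^ k) x = y)
    (f : (Fin n → C) → Fin n → C)
    (hsched : ∀ (s : Fin n → C) (i : Fin n),
      ¬ BestResponse (ringPayoff (n := n) (C := C)) s i →
      ringPayoff s i < ringPayoff (Function.update s i (f s i)) i)
    (hf0 : ∀ s : Fin n → C, f s 0 = π (s 0))
    (σ : ℕ → Fin n → C) (sel : ℕ → Fin n)
    (hgen : ∀ k : ℕ,
      ¬ BestResponse (ringPayoff (n := n) (C := C)) (σ k) (sel k) ∧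
      σ (k + 1) = Function.update (σ k) (sel k) (f (σ k) (sel k))) :
    (∀ (i : Fin n) (k : ℕ), ∃ m, k ≤ m ∧ sel m = i) ∧
    (∃ K : ℕ, ∀ m, K ≤ m → Legitimate (ringPayoff (n := n) (C := C)) (σ m)) := by
  have hn2 : 2 ≤ n := by omega
  have : Nontrivial C := Fintype.one_lt_card_iff_nontrivial.mp (by omega)
  have hpath : IsImprovementPath ringPayoff σ sel := fun k => by
    rw [(hgen k).2]
    exact stepAt_update_of_lt (hsched _ _ (hgen k).1)
  have h0 : ∀ k, sel k = 0 → σ (k + 1) 0 = π (σ k 0) := fun k hk => by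
    rw [(hgen k).2, hk, Function.update_self, hf0]
  obtain ⟨K, c, hK⟩ := hpath.exists_eq_const hn2 hC h0 hπ
  have hone : ∀ m ≥ K, privileged (σ m) = {sel m} :=
    fun m => hpath.privileged_eq_singleton_of_le (by rw [hK, privileged_const, card_singleton])
  exact ⟨Fin.exists_ge_apply_eq_of_apply_add_one fun m hm => hpath.sel_add_one_eq (hone m hm),
    K, fun m hm => legitimate_of_privileged_eq_singleton hn2 (hone m hm)⟩
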